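/- Let n ≥ 4 be even. Then the f-polynomials satisfy the polynomial identity P_{n+1}(x) = (1 + x) · P_n(x). -/

import Mathlib

/-!
A set `S ⊆ [n]` is a peak set exactly when `2 * #{s ∈ S | s ≤ t} < t` for every `t ∈ S`.
Necessity: the peaks of value `≤ t`, their right neighbours and the left neighbour of the
leftmost of them are `2 * #{s ∈ S | s ≤ t} + 1` distinct positions carrying distinct values
in `[1, t]`. Sufficiency: with `c₀ < c₁ < ⋯` the elements of `[n] \ S` and `s₁ < ⋯ < s_k` those
of `S`, admissibility gives `c_j < s_j` for `1 ≤ j ≤ k`, so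
`c₀ s₁ c₁ s₂ c₂ ⋯ s_k c_k c_{k+1} ⋯` has peak set `S`.

A nonempty admissible `T ⊆ [n]` has `2 * #T < n`; for even `n` this gives `2 * (#T + 1) < n + 1`,
so `n + 1` can be added to any admissible `T ⊆ [n]`. Hence `P_{n+1}` is the disjoint union of
`P_n` and `{T ∪ {n + 1} | T ∈ P_n}`, which is the coefficientwise form of `P_{n+1} = (1 + x) P_n`.
-/

open Finset Polynomial

/-- `σ` is a permutation of `[n] = {1, …, n}` (viewed as a function `ℕ → ℕ`
restricted to a bijection of `{1, …, n}` onto itself). -/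
def IsPermOn (n : ℕ) (σ : ℕ → ℕ) : Prop :=
  Set.BijOn σ (Set.Icc 1 n) (Set.Icc 1 n)

/-- The circular peak set of `σ` (as a permutation of `[n]`):
`CP(σ) = {σ(i) : 2 ≤ i ≤ n−1, σ(i−1) < σ(i) > σ(i+1)}`. -/
def CP (n : ℕ) (σ : ℕ → ℕ) : Finset ℕ :=
  ((Finset.Icc 2 (n - 1)).filter (fun i => σ (i - 1) < σ i ∧ σ (i + 1) < σ i)).image σ

open scoped Classical in
/-- `Pn n` is the collection of all subsets `S ⊆ [n]` arising as the circular peak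
set of some permutation of `[n]`. -/
noncomputable def Pn (n : ℕ) : Finset (Finset ℕ) :=
  (Finset.Icc 1 n).powerset.filter (fun S => ∃ σ : ℕ → ℕ, IsPermOn n σ ∧ CP n σ = S)

/-- `pcount n k` is the number of members of `Pn n` of cardinality `k`;
in the paper's notation, `p_{n,i} = pcount n (i+1)`. -/
noncomputable def pcount (n k : ℕ) : ℕ :=
  ((Pn n).filter (fun S => S.card = k)).card

/-- The f-polynomial `P_n(x) = Σ_{i=0}^{⌊(n−1)/2⌋} p_{n,i−1} x^{⌊(n−1)/2⌋−i}`. -/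
noncomputable def fpoly (n : ℕ) : Polynomial ℚ :=
  ∑ i ∈ Finset.range ((n - 1) / 2 + 1),
    Polynomial.C (pcount n i : ℚ) * Polynomial.X ^ ((n - 1) / 2 - i)

def IsPeakAdmissible (S : Finset ℕ) : Prop :=
  ∀ t ∈ S, 2 * #{s ∈ S | s ≤ t} < t

section Admissible

variable {S T : Finset ℕ}

theorem IsPeakAdmissible.mono (hS : IsPeakAdmissible S) (hTS : T ⊆ S) : IsPeakAdmissible T :=
  fun t ht => (Nat.mul_le_mul_left 2 (card_le_card (filter_subset_filter _ hTS))).trans_lt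
    (hS t (hTS ht))

theorem IsPeakAdmissible.insert {a : ℕ} (hT : IsPeakAdmissible T) (hlt : ∀ t ∈ T, t < a)
    (ha : 2 * (#T + 1) < a) : IsPeakAdmissible (insert a T) := by
  have ha_notMem : a ∉ T := fun h => (hlt a h).false
  intro t ht
  rcases mem_insert.1 ht with rfl | ht
  · rwa [filter_true_of_mem fun s hs => ?_, card_insert_of_notMem ha_notMem]
    rcases mem_insert.1 hs with rfl | hs
    exacts [le_rfl, (hlt s hs).le]
  · rw [filter_insert, if_neg (hlt t ht).not_ge]
    exact hT t ht

theorem IsPeakAdmissible.two_mul_card_lt {n : ℕ} (hS : IsPeakAdmissible S)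
    (hSn : S ⊆ Icc 1 n) (hne : S.Nonempty) : 2 * #S < n := by
  have hmax := hS _ (S.max'_mem hne)
  rw [filter_true_of_mem fun s hs => S.le_max' s hs] at hmax
  exact hmax.trans_le (mem_Icc.1 (hSn (S.max'_mem hne))).2

theorem IsPeakAdmissible.two_mul_card_le {n : ℕ} (hS : IsPeakAdmissible S)
    (hSn : S ⊆ Icc 1 n) : 2 * #S ≤ n := by
  rcases S.eq_empty_or_nonempty with rfl | hne
  · simp
  · exact (hS.two_mul_card_lt hSn hne).le

end Admissible

def peakPositions (n : ℕ) (σ : ℕ → ℕ) : Finset ℕ :=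
  {i ∈ Icc 2 (n - 1) | σ (i - 1) < σ i ∧ σ (i + 1) < σ i}

theorem CP_eq_image_peakPositions (n : ℕ) (σ : ℕ → ℕ) : CP n σ = (peakPositions n σ).image σ :=
  rfl

theorem succ_notMem_peakPositions {n i : ℕ} {σ : ℕ → ℕ} (hi : i ∈ peakPositions n σ) :
    i + 1 ∉ peakPositions n σ := by
  simp only [peakPositions, mem_filter, Nat.add_sub_cancel] at hi ⊢
  exact fun h => lt_asymm hi.2.2 h.2.1

theorem card_insert_pred_min'_union_image_succ {A : Finset ℕ} (hne : A.Nonempty) (h0 : 0 ∉ A)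
    (hsep : ∀ a ∈ A, a + 1 ∉ A) :
    #(insert (A.min' hne - 1) (A ∪ A.image (· + 1))) = 2 * #A + 1 := by
  have hmin_pos : 0 < A.min' hne := Nat.pos_of_ne_zero fun h => h0 (h ▸ A.min'_mem hne)
  have hdisj : Disjoint A (A.image (· + 1)) := by
    simp only [disjoint_right, mem_image]
    rintro _ ⟨a, ha, rfl⟩
    exact hsep a ha
  rw [card_insert_of_notMem, card_union_of_disjoint hdisj,
    card_image_of_injective _ (add_left_injective 1), two_mul]
  simp only [mem_union, mem_image, not_or, not_exists, not_and]
  exact ⟨fun h => (A.min'_le _ h).not_gt (by omega),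
    fun a ha h => (A.min'_le a ha).not_gt (by omega)⟩

theorem IsPermOn.isPeakAdmissible_CP {n : ℕ} {σ : ℕ → ℕ} (hσ : IsPermOn n σ) :
    IsPeakAdmissible (CP n σ) := by
  intro t ht
  obtain ⟨p, hp, rfl⟩ := mem_image.1 ht
  set A := {i ∈ peakPositions n σ | σ i ≤ σ p}
  have hA : ∀ a ∈ A, (2 ≤ a ∧ a ≤ n - 1) ∧ σ (a - 1) < σ a ∧ σ (a + 1) < σ a ∧ σ a ≤ σ p := by
    intro a ha
    simpa only [A, peakPositions, mem_filter, mem_Icc, and_assoc] using ha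
  have hcard : #{s ∈ CP n σ | s ≤ σ p} = #A := by
    rw [CP_eq_image_peakPositions, filter_image]
    exact card_image_of_injOn (hσ.injOn.mono fun a ha => by
      have := (hA a ha).1; exact ⟨by omega, by omega⟩)
  have hne : A.Nonempty := ⟨p, mem_filter.2 ⟨hp, le_rfl⟩⟩
  set B := insert (A.min' hne - 1) (A ∪ A.image (· + 1))
  have hB : ∀ b ∈ B, b ∈ Set.Icc 1 n ∧ σ b ≤ σ p := by
    simp only [B, mem_insert, mem_union, mem_image]
    rintro b (rfl | hb | ⟨a, ha, rfl⟩)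
    · obtain ⟨hpos, hlt, -, hle⟩ := hA _ (A.min'_mem hne)
      exact ⟨⟨by omega, by omega⟩, hlt.le.trans hle⟩
    · obtain ⟨hpos, -, -, hle⟩ := hA b hb
      exact ⟨⟨by omega, by omega⟩, hle⟩
    · obtain ⟨hpos, -, hlt, hle⟩ := hA a ha
      exact ⟨⟨by omega, by omega⟩, hlt.le.trans hle⟩
  have hBcard : #B ≤ σ p := by
    simpa using card_le_card_of_injOn (t := Icc 1 (σ p)) σ
      (fun b hb => mem_Icc.2 ⟨(hσ.mapsTo (hB b hb).1).1, (hB b hb).2⟩)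
      (hσ.injOn.mono fun b hb => (hB b hb).1)
  rw [card_insert_pred_min'_union_image_succ hne (fun h => by have := (hA 0 h).1; omega)
    (fun a ha h => succ_notMem_peakPositions (mem_filter.1 ha).1 (mem_filter.1 h).1)]
    at hBcard
  omega

namespace Nat

variable (A : Finset ℕ)

theorem nth_mem_finset {j : ℕ} (hj : j < #A) : nth (· ∈ A) j ∈ A :=
  nth_mem_of_lt_card A.finite_toSet (by rwa [Finset.finite_toSet_toFinset])

theorem nth_lt_nth_finset {i j : ℕ} (hij : i < j) (hj : j < #A) :
    nth (· ∈ A) i < nth (· ∈ A) j :=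
  nth_lt_nth_of_lt_card A.finite_toSet hij (by rwa [Finset.finite_toSet_toFinset])

theorem count_le_card_finset (i : ℕ) : count (· ∈ A) i ≤ #A := by
  simpa using count_le_card A.finite_toSet i

theorem count_lt_card_finset {i : ℕ} (hi : i ∈ A) : count (· ∈ A) i < #A := by
  simpa using count_lt_card A.finite_toSet hi

theorem count_nth_finset {j : ℕ} (hj : j < #A) : count (· ∈ A) (nth (· ∈ A) j) = j :=
  count_nth_of_lt_card_finite A.finite_toSet (by rwa [Finset.finite_toSet_toFinset])

theorem count_succ_eq_card_filter_le (t : ℕ) : count (· ∈ A) (t + 1) = #{s ∈ A | s ≤ t} := by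
  rw [count_eq_card_filter_range]
  congr 1
  ext s
  simp only [Finset.mem_filter, Finset.mem_range, Nat.lt_succ_iff]
  tauto

end Nat

theorem Finset.bijOn_piecewise {α β : Type*} [DecidableEq α] [DecidableEq β]
    {A U : Finset α} {B V : Finset β} {f g : α → β} (hAU : A ⊆ U) (hBV : B ⊆ V)
    (hf : Set.BijOn f A B) (hg : Set.BijOn g ↑(U \ A) ↑(V \ B)) :
    Set.BijOn (A.piecewise f g) U V := by
  have hf' : Set.BijOn (A.piecewise f g) A B :=
    hf.congr fun x hx => (A.piecewise_eq_of_mem f g hx).symm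
  have hg' : Set.BijOn (A.piecewise f g) ↑(U \ A) ↑(V \ B) :=
    hg.congr fun x hx => (A.piecewise_eq_of_notMem f g (mem_sdiff.1 hx).2).symm
  have hdisj : Disjoint (A : Set α) ↑(U \ A) := by
    rw [coe_sdiff]; exact Set.disjoint_sdiff_right
  have h := hf'.union hg' ((Set.injOn_union hdisj).2 ⟨hf'.injOn, hg'.injOn,
    fun x hx y hy hxy => (mem_sdiff.1 (hg'.mapsTo hy)).2 (hxy ▸ hf'.mapsTo hx)⟩)
  rwa [← coe_union, ← coe_union, union_sdiff_of_subset hAU, union_sdiff_of_subset hBV] at h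

noncomputable def rankMap (A B : Finset ℕ) (i : ℕ) : ℕ :=
  Nat.nth (· ∈ B) (Nat.count (· ∈ A) i)

section RankMap

variable {A B : Finset ℕ}

theorem rankMap_strictMonoOn (h : #A ≤ #B) : StrictMonoOn (rankMap A B) A :=
  fun _ hi _ hj hij => Nat.nth_lt_nth_finset B (Nat.count_strict_mono hi hij)
    ((Nat.count_lt_card_finset A hj).trans_le h)

theorem rankMap_bijOn (h : #A = #B) : Set.BijOn (rankMap A B) A B := by
  have hmaps : Set.MapsTo (rankMap A B) A B := fun i hi =>
    Nat.nth_mem_finset B (h ▸ Nat.count_lt_card_finset A hi)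
  have hinj := (rankMap_strictMonoOn h.le).injOn
  exact ⟨hmaps, hinj, surjOn_of_injOn_of_card_le _ hmaps hinj h.ge⟩

end RankMap

def evenPositions (k : ℕ) : Finset ℕ :=
  (range k).image fun j => 2 * j + 2

theorem mem_evenPositions {k i : ℕ} : i ∈ evenPositions k ↔ i % 2 = 0 ∧ 2 ≤ i ∧ i ≤ 2 * k := by
  simp only [evenPositions, mem_image, mem_range]
  exact ⟨by rintro ⟨j, hj, rfl⟩; omega, fun h => ⟨i / 2 - 1, by omega, by omega⟩⟩

theorem card_evenPositions (k : ℕ) : #(evenPositions k) = k := by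
  rw [evenPositions, card_image_of_injective _ fun a b h => by omega, card_range]

theorem count_evenPositions {k j : ℕ} (hj : j ≤ k) :
    Nat.count (· ∈ evenPositions k) (2 * j + 2) = j := by
  induction j with
  | zero => simp [Nat.count_succ, mem_evenPositions]
  | succ j ih =>
    rw [show 2 * (j + 1) + 2 = 2 * j + 2 + 1 + 1 by ring, Nat.count_succ, Nat.count_succ,
      ih (by omega)]
    simp only [mem_evenPositions]
    split_ifs <;> omega

theorem count_sdiff_evenPositions {n k j : ℕ} (hkn : 2 * k < n) (hj : j ≤ k) :
    Nat.count (· ∈ Icc 1 n \ evenPositions k) (2 * j + 1) = j := by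
  induction j with
  | zero => simp [Nat.count_succ]
  | succ j ih =>
    rw [show 2 * (j + 1) + 1 = 2 * j + 1 + 1 + 1 by ring, Nat.count_succ, Nat.count_succ,
      ih (by omega)]
    simp only [mem_sdiff, mem_Icc, mem_evenPositions]
    split_ifs <;> omega

section Interleaving

variable {n : ℕ} {S : Finset ℕ}

theorem count_sdiff_add_count (hS : S ⊆ Icc 1 n) {t : ℕ} (ht : t ≤ n) :
    Nat.count (· ∈ Icc 1 n \ S) (t + 1) + Nat.count (· ∈ S) (t + 1) = t := by
  induction t with
  | zero => simpa [Nat.count_succ] using fun h => (mem_Icc.1 (hS h)).1.not_gt one_pos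
  | succ t ih =>
    have ht' : t + 1 ∈ Icc 1 n := mem_Icc.2 ⟨by omega, ht⟩
    have := ih (by omega)
    rw [Nat.count_succ _ (t + 1), Nat.count_succ _ (t + 1)]
    by_cases h : t + 1 ∈ S
    · rw [if_neg fun h' => (mem_sdiff.1 h').2 h, if_pos h]; omega
    · rw [if_pos (mem_sdiff.2 ⟨ht', h⟩), if_neg h]; omega

theorem IsPeakAdmissible.nth_sdiff_succ_lt_nth (hS : S ⊆ Icc 1 n) (hadm : IsPeakAdmissible S)
    {j : ℕ} (hj : j < #S) :
    j + 1 < #(Icc 1 n \ S) ∧ Nat.nth (· ∈ Icc 1 n \ S) (j + 1) < Nat.nth (· ∈ S) j := by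
  set s := Nat.nth (· ∈ S) j
  have hs : s ∈ S := Nat.nth_mem_finset S hj
  have hsn := mem_Icc.1 (hS hs)
  have hcount : Nat.count (· ∈ S) s = j := Nat.count_nth_finset S hj
  have hle : #{x ∈ S | x ≤ s} = j + 1 := by
    rw [← Nat.count_succ_eq_card_filter_le, Nat.count_succ, hcount, if_pos hs]
  have hsplit := count_sdiff_add_count hS (t := s - 1) (by omega)
  rw [Nat.sub_add_cancel hsn.1, hcount] at hsplit
  have hgt : j + 1 < Nat.count (· ∈ Icc 1 n \ S) s := by
    have := hadm s hs; omega
  exact ⟨hgt.trans_le (Nat.count_le_card_finset _ s), Nat.nth_lt_of_lt_count hgt⟩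

/-- With `c₀ < c₁ < ⋯` the elements of `[n] \ S` and `s₁ < ⋯ < s_k` those of `S`, this is the
sequence `c₀ s₁ c₁ s₂ c₂ ⋯ s_k c_k c_{k+1} ⋯`. -/
noncomputable def peakPerm (n : ℕ) (S : Finset ℕ) : ℕ → ℕ :=
  (evenPositions #S).piecewise (rankMap (evenPositions #S) S)
    (rankMap (Icc 1 n \ evenPositions #S) (Icc 1 n \ S))

theorem peakPerm_even {j : ℕ} (hj : j < #S) :
    peakPerm n S (2 * j + 2) = Nat.nth (· ∈ S) j := by
  rw [peakPerm, piecewise_eq_of_mem _ _ _ (mem_evenPositions.2 (by omega)), rankMap,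
    count_evenPositions hj.le]

theorem peakPerm_odd (hSn : 2 * #S < n) {j : ℕ} (hj : j ≤ #S) :
    peakPerm n S (2 * j + 1) = Nat.nth (· ∈ Icc 1 n \ S) j := by
  rw [peakPerm, piecewise_eq_of_notMem _ _ _ fun h => by have := mem_evenPositions.1 h; omega,
    rankMap, count_sdiff_evenPositions hSn hj]

theorem evenPositions_subset_Icc {k : ℕ} (hkn : 2 * k ≤ n) : evenPositions k ⊆ Icc 1 n :=
  fun i hi => by have := mem_evenPositions.1 hi; exact mem_Icc.2 ⟨by omega, by omega⟩

theorem card_sdiff_evenPositions (hS : S ⊆ Icc 1 n) (hSn : 2 * #S ≤ n) :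
    #(Icc 1 n \ evenPositions #S) = #(Icc 1 n \ S) := by
  rw [card_sdiff_of_subset (evenPositions_subset_Icc hSn), card_sdiff_of_subset hS,
    card_evenPositions]

theorem peakPerm_bijOn (hS : S ⊆ Icc 1 n) (hSn : 2 * #S ≤ n) :
    Set.BijOn (peakPerm n S) (Icc 1 n) (Icc 1 n) :=
  bijOn_piecewise (evenPositions_subset_Icc hSn) hS (rankMap_bijOn (card_evenPositions _))
    (rankMap_bijOn (card_sdiff_evenPositions hS hSn))

theorem peakPerm_isPeak (hS : S ⊆ Icc 1 n) (hadm : IsPeakAdmissible S) {j : ℕ} (hj : j < #S) :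
    peakPerm n S (2 * j + 1) < peakPerm n S (2 * j + 2) ∧
      peakPerm n S (2 * j + 3) < peakPerm n S (2 * j + 2) := by
  have hSn := hadm.two_mul_card_lt hS ⟨_, Nat.nth_mem_finset S hj⟩
  obtain ⟨hlen, hlt⟩ := hadm.nth_sdiff_succ_lt_nth hS hj
  rw [peakPerm_even hj, peakPerm_odd hSn hj.le, show 2 * j + 3 = 2 * (j + 1) + 1 by ring,
    peakPerm_odd hSn hj]
  exact ⟨(Nat.nth_lt_nth_finset _ j.lt_succ_self hlen).trans hlt, hlt⟩

theorem peakPerm_lt_succ (hS : S ⊆ Icc 1 n) (hadm : IsPeakAdmissible S) {i : ℕ}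
    (hi : i ∈ Icc 1 n \ evenPositions #S) (hin : i + 1 ≤ n) :
    peakPerm n S i < peakPerm n S (i + 1) := by
  by_cases hsucc : i + 1 ∈ evenPositions #S
  · obtain ⟨j, hj, hij⟩ : ∃ j < #S, i = 2 * j + 1 := by
      have := mem_evenPositions.1 hsucc; exact ⟨i / 2, by omega, by omega⟩
    subst hij
    exact (peakPerm_isPeak hS hadm hj).1
  · have hi' := mem_sdiff.1 hi
    have hsucc' : i + 1 ∈ Icc 1 n \ evenPositions #S :=
      mem_sdiff.2 ⟨mem_Icc.2 ⟨by omega, hin⟩, hsucc⟩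
    rw [peakPerm, piecewise_eq_of_notMem _ _ _ hi'.2, piecewise_eq_of_notMem _ _ _ hsucc]
    exact rankMap_strictMonoOn (card_sdiff_evenPositions hS (hadm.two_mul_card_le hS)).le
      hi hsucc' i.lt_succ_self

theorem peakPositions_peakPerm (hS : S ⊆ Icc 1 n) (hadm : IsPeakAdmissible S) :
    peakPositions n (peakPerm n S) = evenPositions #S := by
  ext i
  simp only [peakPositions, mem_filter, mem_Icc]
  constructor
  · rintro ⟨hi, -, hdesc⟩
    by_contra hP
    exact (peakPerm_lt_succ hS hadm (mem_sdiff.2 ⟨mem_Icc.2 ⟨by omega, by omega⟩, hP⟩)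
      (by omega)).not_gt hdesc
  · intro hP
    obtain ⟨j, hj, rfl⟩ : ∃ j < #S, 2 * j + 2 = i := by
      have := mem_evenPositions.1 hP; exact ⟨i / 2 - 1, by omega, by omega⟩
    have hSn := hadm.two_mul_card_lt hS ⟨_, Nat.nth_mem_finset S hj⟩
    exact ⟨⟨by omega, by omega⟩, peakPerm_isPeak hS hadm hj⟩

theorem isPermOn_peakPerm (hS : S ⊆ Icc 1 n) (hadm : IsPeakAdmissible S) :
    IsPermOn n (peakPerm n S) := by
  simpa [IsPermOn] using peakPerm_bijOn hS (hadm.two_mul_card_le hS)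

theorem CP_peakPerm (hS : S ⊆ Icc 1 n) (hadm : IsPeakAdmissible S) : CP n (peakPerm n S) = S := by
  rw [CP_eq_image_peakPositions, peakPositions_peakPerm hS hadm, peakPerm,
    image_congr (g := rankMap (evenPositions #S) S) fun i hi => piecewise_eq_of_mem _ _ _ hi,
    ← coe_inj, coe_image,
    (rankMap_bijOn (card_evenPositions #S)).image_eq]

end Interleaving

section Counting

variable {n : ℕ}

theorem mem_Pn_iff {S : Finset ℕ} : S ∈ Pn n ↔ S ⊆ Icc 1 n ∧ IsPeakAdmissible S := by
  classical
  rw [Pn, mem_filter, mem_powerset]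
  refine and_congr_right fun hS => ⟨?_, fun hadm =>
    ⟨peakPerm n S, isPermOn_peakPerm hS hadm, CP_peakPerm hS hadm⟩⟩
  rintro ⟨σ, hσ, rfl⟩
  exact hσ.isPeakAdmissible_CP

theorem succ_notMem_of_mem_Pn {S : Finset ℕ} (hS : S ∈ Pn n) : n + 1 ∉ S := fun h => by
  have := mem_Icc.1 ((mem_Pn_iff.1 hS).1 h); omega

theorem Pn_succ_of_even (hn : 2 ≤ n) (hev : Even n) :
    Pn (n + 1) = Pn n ∪ (Pn n).image (insert (n + 1)) := by
  have hIcc : Icc 1 n ⊆ Icc 1 (n + 1) := Icc_subset_Icc_right n.le_succ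
  ext S
  simp only [mem_union, mem_image, mem_Pn_iff]
  constructor
  · rintro ⟨hS, hadm⟩
    have hSn : ∀ x ∈ S, x ≠ n + 1 → x ∈ Icc 1 n := fun x hx hxn => by
      have := mem_Icc.1 (hS hx); exact mem_Icc.2 ⟨this.1, by omega⟩
    by_cases h : n + 1 ∈ S
    · refine Or.inr ⟨S.erase (n + 1), ⟨fun x hx => ?_, hadm.mono (erase_subset _ _)⟩,
        insert_erase h⟩
      exact hSn x (mem_erase.1 hx).2 (mem_erase.1 hx).1
    · exact Or.inl ⟨fun x hx => hSn x hx (ne_of_mem_of_not_mem hx h), hadm⟩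
  · rintro (⟨hS, hadm⟩ | ⟨T, ⟨hT, hadm⟩, rfl⟩)
    · exact ⟨hS.trans hIcc, hadm⟩
    refine ⟨insert_subset (mem_Icc.2 ⟨by omega, le_rfl⟩) (hT.trans hIcc),
      hadm.insert (fun t ht => Nat.lt_succ_of_le (mem_Icc.1 (hT ht)).2) ?_⟩
    -- `2 * #T < n` with `n` even leaves room for the new peak `n + 1`
    rcases T.eq_empty_or_nonempty with rfl | hne
    · simpa using hn
    · have := hadm.two_mul_card_lt hT hne
      obtain ⟨m, rfl⟩ := hev
      omega

theorem pcount_zero (n : ℕ) : pcount n 0 = 1 := by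
  rw [pcount, card_eq_one]
  refine ⟨∅, eq_singleton_iff_unique_mem.2 ⟨?_, fun S hS => card_eq_zero.1 (mem_filter.1 hS).2⟩⟩
  exact mem_filter.2 ⟨mem_Pn_iff.2 ⟨empty_subset _, fun t ht => absurd ht (notMem_empty t)⟩, rfl⟩

theorem pcount_eq_zero {k : ℕ} (hk : k ≠ 0) (hnk : n ≤ 2 * k) : pcount n k = 0 := by
  rw [pcount, card_eq_zero, filter_eq_empty_iff]
  intro S hS hSk
  obtain ⟨hSn, hadm⟩ := mem_Pn_iff.1 hS
  have := hadm.two_mul_card_lt hSn (card_ne_zero.1 (hSk ▸ hk))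
  omega

theorem pcount_succ_succ_of_even (hn : 2 ≤ n) (hev : Even n) (k : ℕ) :
    pcount (n + 1) (k + 1) = pcount n (k + 1) + pcount n k := by
  have hdisj : Disjoint (Pn n) ((Pn n).image (insert (n + 1))) := by
    simp only [disjoint_right, mem_image]
    rintro _ ⟨T, -, rfl⟩ h
    exact succ_notMem_of_mem_Pn h (mem_insert_self _ _)
  have hinj : Set.InjOn (insert (n + 1) : Finset ℕ → Finset ℕ) (Pn n : Set (Finset ℕ)) :=
    fun T hT T' hT' h => by
      rw [← erase_insert (succ_notMem_of_mem_Pn hT), h, erase_insert (succ_notMem_of_mem_Pn hT')]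
  rw [pcount, Pn_succ_of_even hn hev, filter_union,
    card_union_of_disjoint (disjoint_filter_filter hdisj), filter_image,
    card_image_of_injOn (hinj.mono (filter_subset _ _))]
  congr 2
  exact filter_congr fun T hT => by
    rw [card_insert_of_notMem (succ_notMem_of_mem_Pn hT), Nat.add_right_cancel_iff]

end Counting

theorem Polynomial.sum_C_mul_X_pow_eq_one_add_X_mul {R : Type*} [CommSemiring R] (a b : ℕ → R)
    (m : ℕ) (h₀ : a 0 = b 0) (hsucc : ∀ i, a (i + 1) = b (i + 1) + b i) (hm : b m = 0) :
    ∑ i ∈ range (m + 1), C (a i) * X ^ (m - i) =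
      (1 + X) * ∑ i ∈ range m, C (b i) * X ^ (m - 1 - i) := by
  simp only [Nat.sub_sub, add_comm 1]
  calc ∑ i ∈ range (m + 1), C (a i) * X ^ (m - i)
      = ∑ i ∈ range m, C (b i) * X ^ (m - (i + 1)) +
          (∑ i ∈ range m, C (b (i + 1)) * X ^ (m - (i + 1)) + C (b 0) * X ^ (m - 0)) := by
        rw [sum_range_succ', h₀]
        simp only [hsucc, C_add, add_mul, sum_add_distrib]
        ring
    _ = ∑ i ∈ range m, C (b i) * X ^ (m - (i + 1)) + ∑ i ∈ range m, C (b i) * X ^ (m - i) := by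
        rw [← sum_range_succ' fun i => C (b i) * X ^ (m - i), sum_range_succ, hm, C_0, zero_mul,
          add_zero]
    _ = (1 + X) * ∑ i ∈ range m, C (b i) * X ^ (m - (i + 1)) := by
        rw [add_mul, one_mul, mul_sum]
        congr 1
        refine sum_congr rfl fun i hi => ?_
        rw [mul_left_comm, ← pow_succ', Nat.sub_add_eq, Nat.sub_add_cancel]
        exact Nat.sub_pos_of_lt (mem_range.1 hi)

/-- Theorem 3.4 (even case): for even `n ≥ 4`, `P_{n+1}(x) = (1 + x)·P_n(x)`. -/
theorem fpoly_recurrence_even (n : ℕ) (hn : 4 ≤ n) (hev : Even n) :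
    fpoly (n + 1) = (1 + Polynomial.X) * fpoly n := by
  obtain ⟨m, hnm⟩ := id hev
  rw [fpoly, fpoly, show (n + 1 - 1) / 2 = m by omega, show (n - 1) / 2 = m - 1 by omega,
    Nat.sub_add_cancel (by omega : 1 ≤ m)]
  refine sum_C_mul_X_pow_eq_one_add_X_mul _ _ m (by rw [pcount_zero, pcount_zero]) (fun i => ?_)
    (by rw [pcount_eq_zero (by omega) (by omega), Nat.cast_zero])
  rw [pcount_succ_succ_of_even (by omega) hev i, Nat.cast_add]
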